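/- Every Lagrangian 3-plane is special Lagrangian of some phase: if E ⊆ ℂ³ is a 3-dimensional real subspace with Ω₀(u,v) = 0 for all u, v ∈ E, then there exists θ ∈ ℝ such that E is special Lagrangian of phase θ, i.e. Im(e^{−iθ}·Υ₀(u,v,w)) = 0 for all u, v, w ∈ E. Equivalently, for any g-orthonormal basis (u,v,w) of a Lagrangian 3-plane E, |Υ₀(u,v,w)| = 1. -/

import Mathlib

noncomputable section

open Complex

/-- `ℂ³`, identified with `ℝ⁶` via `(x₁,…,x₆) ↦ (x₁+i x₄, x₂+i x₅, x₃+i x₆)`. -/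
abbrev C3 : Type := Fin 3 → ℂ

/-- The standard Hermitian inner product `h(u,v) = Σᵢ conj(uᵢ)·vᵢ` on `ℂ³`. -/
def Hh (u v : C3) : ℂ := ∑ i, starRingEnd ℂ (u i) * v i

/-- The induced real inner product `g = Re h`. -/
def gR (u v : C3) : ℝ := (Hh u v).re

/-- The standard symplectic form `Ω₀ = Im h`. -/
def Om (u v : C3) : ℝ := (Hh u v).im

/-- The holomorphic volume form `Υ₀(u,v,w) = det [u v w]`. -/
def Ups (u v w : C3) : ℂ := Matrix.det (Matrix.of fun i j => ![u, v, w] j i)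

/-!
Restricted to a 3-dimensional real subspace `E`, `Υ₀` is a real alternating 3-form on `E` with
values in `ℂ`; since `Λ³E*` is a line, it is a real multiple of its value `z` on a fixed basis, so
`e^{-i arg z} Υ₀` is real on `E`. On a Lagrangian plane `Ω₀ = Im h` vanishes, so `h = g` there: a
`g`-orthonormal triple in `E` is `h`-orthonormal, the matrix with these rows is unitary, and its
determinant has modulus one.
-/

open scoped Matrix

theorem Complex.im_exp_neg_arg_mul_I_mul_real_smul (z : ℂ) (r : ℝ) :
    (exp (-(z.arg : ℂ) * I) * (r • z)).im = 0 := by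
  have h : exp (-(z.arg : ℂ) * I) * z = ‖z‖ := by
    nth_rewrite 2 [← norm_mul_exp_arg_mul_I z]
    rw [mul_left_comm, ← exp_add]
    simp
  rw [mul_smul_comm, h, real_smul, ← ofReal_mul, ofReal_im]

section Phase

variable {M ι : Type*} [AddCommGroup M] [Fintype ι] [DecidableEq ι]

theorem AlternatingMap.apply_eq_basis_det_smul {R N : Type*} [CommRing R] [Module R M]
    [AddCommGroup N] [Module R N] (e : Module.Basis ι R M) (f : M [⋀^ι]→ₗ[R] N) (v : ι → M) :
    f v = e.det v • f e := by
  suffices f = e.det.smulRight (f e) from DFunLike.congr_fun this v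
  refine e.ext_alternating fun i h => ?_
  let σ : Equiv.Perm ι := Equiv.ofBijective i (Finite.injective_iff_bijective.1 h)
  change f (e ∘ σ) = (e.det.smulRight (f e)) (e ∘ σ)
  simp [AlternatingMap.map_perm, Module.Basis.det_self]

theorem AlternatingMap.exists_im_exp_neg_mul_I_mul_eq_zero [Module ℝ M]
    (e : Module.Basis ι ℝ M) (f : M [⋀^ι]→ₗ[ℝ] ℂ) :
    ∃ θ : ℝ, ∀ v, (exp (-(θ : ℂ) * I) * f v).im = 0 :=
  ⟨(f e).arg, fun v => by
    rw [f.apply_eq_basis_det_smul e v]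
    exact (f e).im_exp_neg_arg_mul_I_mul_real_smul _⟩

end Phase

def upsForm : C3 [⋀^Fin 3]→ₗ[ℝ] ℂ :=
  { (Matrix.detRowAlternating : C3 [⋀^Fin 3]→ₗ[ℂ] ℂ).toMultilinearMap.restrictScalars ℝ with
    map_eq_zero_of_eq' := fun v _ _ h hij => by
      exact Matrix.detRowAlternating.map_eq_zero_of_eq v h hij }

theorem Ups_eq_det_of (u v w : C3) : Ups u v w = (Matrix.of ![u, v, w]).det :=
  Matrix.det_transpose _

theorem upsForm_apply (x : Fin 3 → C3) : upsForm x = Ups (x 0) (x 1) (x 2) := by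
  rw [Ups_eq_det_of, ← Matrix.etaExpand_eq x]
  rfl

theorem Hh_comm (u v : C3) : Hh v u = starRingEnd ℂ (Hh u v) := by
  simp [Hh, mul_comm]

theorem gR_comm (u v : C3) : gR v u = gR u v := by
  rw [gR, Hh_comm, conj_re, gR]

theorem Hh_eq_gR_of_Om_eq_zero {u v : C3} (h : Om u v = 0) : Hh u v = gR u v :=
  Complex.ext rfl (by simpa [Om] using h)

theorem mul_conjTranspose_of_apply (x : Fin 3 → C3) (j k : Fin 3) :
    (Matrix.of x * (Matrix.of x)ᴴ) j k = Hh (x k) (x j) := by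
  simp [Matrix.mul_apply, Hh, mul_comm]

theorem norm_Ups_eq_one_of_Hh_orthonormal (u v w : C3)
    (h : ∀ j k, Hh (![u, v, w] k) (![u, v, w] j) = (1 : Matrix (Fin 3) (Fin 3) ℂ) j k) :
    ‖Ups u v w‖ = 1 := by
  rw [Ups_eq_det_of]
  refine CStarRing.norm_of_mem_unitary (Matrix.det_of_mem_unitary ?_)
  rw [Matrix.mem_unitaryGroup_iff, Matrix.star_eq_conjTranspose]
  ext j k
  rw [mul_conjTranspose_of_apply, h]

/-- Every Lagrangian 3-plane in `ℂ³` is special Lagrangian of some phase `θ`;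
equivalently, `|Υ₀(u,v,w)| = 1` for every `g`-orthonormal basis `(u,v,w)` of a
Lagrangian 3-plane. -/
theorem lagrangian_is_special_of_some_phase (E : Submodule ℝ C3)
    (hdim : Module.finrank ℝ E = 3)
    (hlag : ∀ u ∈ E, ∀ v ∈ E, Om u v = 0) :
    (∃ θ : ℝ, ∀ u ∈ E, ∀ v ∈ E, ∀ w ∈ E,
        (Complex.exp (-(θ : ℂ) * Complex.I) * Ups u v w).im = 0) ∧
    (∀ u v w : C3, u ∈ E → v ∈ E → w ∈ E →
        gR u u = 1 → gR v v = 1 → gR w w = 1 →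
        gR u v = 0 → gR u w = 0 → gR v w = 0 →
        ‖Ups u v w‖ = 1) := by
  constructor
  · obtain ⟨θ, hθ⟩ := (upsForm.compLinearMap E.subtype).exists_im_exp_neg_mul_I_mul_eq_zero
      (Module.finBasisOfFinrankEq ℝ E hdim)
    refine ⟨θ, fun u hu v hv w hw => ?_⟩
    simpa [upsForm_apply] using hθ ![⟨u, hu⟩, ⟨v, hv⟩, ⟨w, hw⟩]
  · intro u v w hu hv hw huu hvv hww huv huw hvw
    have hmem : ∀ j, ![u, v, w] j ∈ E := by
      intro j; fin_cases j <;> assumption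
    apply norm_Ups_eq_one_of_Hh_orthonormal
    intro j k
    rw [Hh_eq_gR_of_Om_eq_zero (hlag _ (hmem k) _ (hmem j))]
    fin_cases j <;> fin_cases k <;> simp [huu, hvv, hww, huv, huw, hvw, gR_comm]
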